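/- arXiv:2102.03069 — 4 statements merged into one kernel-verified Lean document; each statement's English description precedes it below -/
import Mathlib

section
/- The function Φ(a, D) := |a|²/q(D)^{2/d} + λ(D² + 1)/q(D), where q is an affine function of D positive on the domain considered, λ ≥ 0, d ≥ 2, and a ∈ ℝ^{d²}, is convex on the open set {(a, D) : q(D) > 0}. -/
open Real Set

private lemma combo_pos {x y a b : ℝ} (hx : 0 < x) (hy : 0 < y) (ha : 0 ≤ a) (hb : 0 ≤ b)
    (hab : a + b = 1) : 0 < a * x + b * y := by
  rcases eq_or_lt_of_le ha with h | h
  · have hb1 : b = 1 := by linarith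
    simp [← h, hb1, hy]
  · have h1 : 0 < a * x := mul_pos h hx
    have h2 : 0 ≤ b * y := mul_nonneg hb hy.le
    linarith

private lemma scalar_ineq {s r₁ r₂ x y m n : ℝ} (hs0 : 0 ≤ s) (hs1 : s ≤ 1)
    (hr₁ : 0 ≤ r₁) (hr₂ : 0 ≤ r₂) (hx : 0 < x) (hy : 0 < y)
    (hm : 0 ≤ m) (hn : 0 ≤ n) (hmn : m + n = 1) :
    (m * r₁ + n * r₂) ^ 2 / (m * x + n * y) ^ s
      ≤ m * (r₁ ^ 2 / x ^ s) + n * (r₂ ^ 2 / y ^ s) := by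
  have hxy : 0 < m * x + n * y := combo_pos hx hy hm hn hmn
  have hX : 0 < x ^ s := rpow_pos_of_pos hx s
  have hY : 0 < y ^ s := rpow_pos_of_pos hy s
  have hT : 0 < (m * x + n * y) ^ s := rpow_pos_of_pos hxy s
  have hconc : m * x ^ s + n * y ^ s ≤ (m * x + n * y) ^ s := by
    have := (Real.concaveOn_rpow hs0 hs1).2 (mem_Ici.2 hx.le) (mem_Ici.2 hy.le) hm hn hmn
    simpa [smul_eq_mul] using this
  have hA : 0 ≤ m * (r₁ ^ 2 / x ^ s) + n * (r₂ ^ 2 / y ^ s) := by positivity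
  set X := x ^ s
  set Y := y ^ s
  have key : (m * r₁ + n * r₂) ^ 2 * (X * Y)
      ≤ (m * r₁ ^ 2 * Y + n * r₂ ^ 2 * X) * (m * X + n * Y) := by
    have hn' : n = 1 - m := by linarith
    subst hn'
    nlinarith [mul_nonneg (mul_nonneg hm hn) (sq_nonneg (r₁ * Y - r₂ * X))]
  have hAeq : m * (r₁ ^ 2 / X) + n * (r₂ ^ 2 / Y)
      = (m * r₁ ^ 2 * Y + n * r₂ ^ 2 * X) / (X * Y) := by
    field_simp
  have hCS : (m * r₁ + n * r₂) ^ 2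
      ≤ (m * (r₁ ^ 2 / X) + n * (r₂ ^ 2 / Y)) * (m * X + n * Y) := by
    rw [hAeq, div_mul_eq_mul_div, le_div_iff₀ (mul_pos hX hY)]
    nlinarith [key]
  rw [div_le_iff₀ hT]
  calc (m * r₁ + n * r₂) ^ 2
      ≤ (m * (r₁ ^ 2 / X) + n * (r₂ ^ 2 / Y)) * (m * X + n * Y) := hCS
    _ ≤ (m * (r₁ ^ 2 / X) + n * (r₂ ^ 2 / Y)) * (m * x + n * y) ^ s :=
        mul_le_mul_of_nonneg_left hconc hA

private lemma second_ineq {D₁ D₂ q₁ q₂ m n : ℝ} (hq₁ : 0 < q₁) (hq₂ : 0 < q₂)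
    (hm : 0 ≤ m) (hn : 0 ≤ n) (hmn : m + n = 1) :
    ((m * D₁ + n * D₂) ^ 2 + 1) / (m * q₁ + n * q₂)
      ≤ m * ((D₁ ^ 2 + 1) / q₁) + n * ((D₂ ^ 2 + 1) / q₂) := by
  have hq : 0 < m * q₁ + n * q₂ := combo_pos hq₁ hq₂ hm hn hmn
  have hre : m * ((D₁ ^ 2 + 1) / q₁) + n * ((D₂ ^ 2 + 1) / q₂)
      = (m * (D₁ ^ 2 + 1) * q₂ + n * (D₂ ^ 2 + 1) * q₁) / (q₁ * q₂) := by
    field_simp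
  rw [div_le_iff₀ hq, hre, div_mul_eq_mul_div, le_div_iff₀ (mul_pos hq₁ hq₂)]
  have hn' : n = 1 - m := by linarith
  subst hn'
  nlinarith [mul_nonneg (mul_nonneg hm hn) (sq_nonneg (D₁ * q₂ - D₂ * q₁)),
    mul_nonneg (mul_nonneg hm hn) (sq_nonneg (q₁ - q₂))]

theorem Phi_convex (d : ℕ) (hd : 2 ≤ d) (lam α β : ℝ) (hlam : 0 ≤ lam) :
    ConvexOn ℝ {p : EuclideanSpace ℝ (Fin (d ^ 2)) × ℝ | 0 < α + β * p.2}
      (fun p =>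
        ‖p.1‖ ^ 2 / (α + β * p.2) ^ ((2 : ℝ) / d) +
          lam * (p.2 ^ 2 + 1) / (α + β * p.2)) := by
  have hd0 : (0 : ℝ) < d := by exact_mod_cast (by omega : 0 < d)
  have hs0 : (0 : ℝ) ≤ 2 / d := by positivity
  have hs1 : (2 : ℝ) / d ≤ 1 := by
    rw [div_le_one hd0]
    exact_mod_cast hd
  constructor
  · intro p hp q hq a b ha hb hab
    simp only [mem_setOf_eq] at *
    have hcomb : α + β * (a • p + b • q).2 = a * (α + β * p.2) + b * (α + β * q.2) := by
      simp only [Prod.snd_add, Prod.smul_snd, smul_eq_mul]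
      linear_combination (-α) * hab
    rw [hcomb]
    exact combo_pos hp hq ha hb hab
  · intro p hp q hq a b ha hb hab
    simp only [mem_setOf_eq] at hp hq
    simp only [Prod.fst_add, Prod.snd_add, Prod.smul_fst, Prod.smul_snd, smul_eq_mul]
    have hcomb : α + β * (a * p.2 + b * q.2) = a * (α + β * p.2) + b * (α + β * q.2) := by
      linear_combination (-α) * hab
    rw [hcomb]
    have hq1 : 0 < α + β * p.2 := hp
    have hq2 : 0 < α + β * q.2 := hq
    have hqc : 0 < a * (α + β * p.2) + b * (α + β * q.2) := combo_pos hq1 hq2 ha hb hab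
    have hT : 0 < (a * (α + β * p.2) + b * (α + β * q.2)) ^ ((2 : ℝ) / d) :=
      rpow_pos_of_pos hqc _
    -- first term
    have hnorm : ‖a • p.1 + b • q.1‖ ≤ a * ‖p.1‖ + b * ‖q.1‖ := by
      calc ‖a • p.1 + b • q.1‖ ≤ ‖a • p.1‖ + ‖b • q.1‖ := norm_add_le _ _
        _ = a * ‖p.1‖ + b * ‖q.1‖ := by
            rw [norm_smul, norm_smul, Real.norm_eq_abs, Real.norm_eq_abs,
              abs_of_nonneg ha, abs_of_nonneg hb]
    have h1 : ‖a • p.1 + b • q.1‖ ^ 2 / (a * (α + β * p.2) + b * (α + β * q.2)) ^ ((2 : ℝ) / d)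
        ≤ a * (‖p.1‖ ^ 2 / (α + β * p.2) ^ ((2 : ℝ) / d))
          + b * (‖q.1‖ ^ 2 / (α + β * q.2) ^ ((2 : ℝ) / d)) := by
      calc ‖a • p.1 + b • q.1‖ ^ 2 / (a * (α + β * p.2) + b * (α + β * q.2)) ^ ((2 : ℝ) / d)
          ≤ (a * ‖p.1‖ + b * ‖q.1‖) ^ 2
              / (a * (α + β * p.2) + b * (α + β * q.2)) ^ ((2 : ℝ) / d) := by
            exact div_le_div_of_nonneg_right (pow_le_pow_left₀ (norm_nonneg _) hnorm 2) hT.le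
        _ ≤ _ := scalar_ineq hs0 hs1 (norm_nonneg _) (norm_nonneg _) hq1 hq2 ha hb hab
    -- second term
    have h2 : lam * ((a * p.2 + b * q.2) ^ 2 + 1) / (a * (α + β * p.2) + b * (α + β * q.2))
        ≤ a * (lam * (p.2 ^ 2 + 1) / (α + β * p.2))
          + b * (lam * (q.2 ^ 2 + 1) / (α + β * q.2)) := by
      have := second_ineq (D₁ := p.2) (D₂ := q.2) hq1 hq2 ha hb hab
      have h := mul_le_mul_of_nonneg_left this hlam
      calc lam * ((a * p.2 + b * q.2) ^ 2 + 1) / (a * (α + β * p.2) + b * (α + β * q.2))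
          = lam * (((a * p.2 + b * q.2) ^ 2 + 1)
              / (a * (α + β * p.2) + b * (α + β * q.2))) := by ring
        _ ≤ lam * (a * ((p.2 ^ 2 + 1) / (α + β * p.2))
              + b * ((q.2 ^ 2 + 1) / (α + β * q.2))) := h
        _ = a * (lam * (p.2 ^ 2 + 1) / (α + β * p.2))
              + b * (lam * (q.2 ^ 2 + 1) / (α + β * q.2)) := by ring
    linarith [h1, h2]
end

section
/- The map J ↦ (tr(JᵀJ), det J) composed with the convex function Φ(s, D) := s/D^{2/d} + λ(D² + 1)/D on {D > 0} shows that φ(J) := tr(JᵀJ)/(det J)^{2/d} + λ(det J + 1/det J) is polyconvex: there exists a function Ψ, convex jointly in (J, det J) on ℝ^{d×d} × (0,∞), with φ(J) = Ψ(J, det J) for all J with det J > 0. -/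
/-!
Since `tr (Jᵀ J)` is the squared Frobenius norm of `J`, it suffices that `(v, t) ↦ ‖v‖² / t ^ p`
is jointly convex on `E × (0, ∞)` for `0 ≤ p ≤ 1` (here `p = 2 / d`). With `s = t ^ p`,
`‖v‖² / s` is the supremum over `c` of `2 |c| ‖v‖ - c² s`, attained at `c = ‖v‖ / s`; each of these
is convex because the norm is convex and `t ↦ t ^ p` is concave, and an attained supremum of convex
functions is convex. The term `λ (D + 1 / D)` is convex in `D > 0` because `λ ≥ 0`.
-/

open Set Matrix

theorem convexOn_of_forall_le_of_exists_eq {𝕜 E β ι : Type*} [Semiring 𝕜] [PartialOrder 𝕜]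
    [AddCommMonoid E] [AddCommMonoid β] [PartialOrder β] [IsOrderedAddMonoid β]
    [SMul 𝕜 E] [Module 𝕜 β] [PosSMulMono 𝕜 β] {s : Set E} {f : E → β} {g : ι → E → β}
    (hs : Convex 𝕜 s) (hg : ∀ i, ConvexOn 𝕜 s (g i)) (hle : ∀ i, ∀ x ∈ s, g i x ≤ f x)
    (heq : ∀ x ∈ s, ∃ i, g i x = f x) : ConvexOn 𝕜 s f := by
  refine ⟨hs, fun x hx y hy a b ha hb hab => ?_⟩
  obtain ⟨i, hi⟩ := heq _ (hs hx hy ha hb hab)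
  calc f (a • x + b • y) = g i (a • x + b • y) := hi.symm
    _ ≤ a • g i x + b • g i y := (hg i).2 hx hy ha hb hab
    _ ≤ a • f x + b • f y := by gcongr <;> exact hle i _ ‹_›

theorem two_mul_abs_mul_sub_sq_mul_le_sq_div (c x : ℝ) {s : ℝ} (hs : 0 < s) :
    2 * |c| * x - c ^ 2 * s ≤ x ^ 2 / s := by
  rw [le_div_iff₀ hs, ← sq_abs c]
  nlinarith [sq_nonneg (x - |c| * s)]

theorem convexOn_norm_sq_div_rpow {E : Type*} [SeminormedAddCommGroup E] [NormedSpace ℝ E]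
    {p : ℝ} (hp₀ : 0 ≤ p) (hp₁ : p ≤ 1) :
    ConvexOn ℝ {q : E × ℝ | 0 < q.2} fun q => ‖q.1‖ ^ 2 / q.2 ^ p := by
  have hs : Convex ℝ {q : E × ℝ | 0 < q.2} := (convex_Ioi 0).linear_preimage (LinearMap.snd ℝ E ℝ)
  refine convexOn_of_forall_le_of_exists_eq
    (g := fun c q => 2 * |c| * ‖q.1‖ - c ^ 2 * q.2 ^ p) hs (fun c => ?_)
    (fun c q hq => two_mul_abs_mul_sub_sq_mul_le_sq_div c _ (Real.rpow_pos_of_pos hq p))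
    (fun q hq => ⟨‖q.1‖ / q.2 ^ p, ?_⟩)
  · have hnorm := ((convexOn_norm convex_univ).comp_linearMap (LinearMap.fst ℝ E ℝ)).smul
      (by positivity : (0 : ℝ) ≤ 2 * |c|)
    have hrpow := ((Real.concaveOn_rpow hp₀ hp₁).comp_linearMap (LinearMap.snd ℝ E ℝ)).smul
      (sq_nonneg c)
    refine ((hnorm.subset (subset_univ _) hs).sub
      (hrpow.subset (fun q (hq : 0 < q.2) => hq.le) hs)).congr fun q _ => ?_
    simp [mul_assoc]
  · have : 0 < q.2 ^ p := Real.rpow_pos_of_pos hq p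
    rw [abs_of_nonneg (by positivity)]
    field_simp
    ring

section Frobenius

attribute [local instance] Matrix.frobeniusNormedAddCommGroup Matrix.frobeniusNormedSpace

theorem Matrix.frobenius_norm_sq_eq_trace_transpose_mul_self {m n : Type*} [Fintype m]
    [Fintype n] (A : Matrix m n ℝ) : ‖A‖ ^ 2 = (Aᵀ * A).trace := by
  rw [frobenius_norm_def, ← Real.rpow_natCast, ← Real.rpow_mul (by positivity)]
  simp [trace, mul_apply, Finset.sum_comm (γ := m), sq]

theorem convexOn_trace_transpose_mul_self_div_rpow {m n : Type*} [Fintype m] [Fintype n]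
    {p : ℝ} (hp₀ : 0 ≤ p) (hp₁ : p ≤ 1) :
    ConvexOn ℝ {q : Matrix m n ℝ × ℝ | 0 < q.2} fun q => (q.1ᵀ * q.1).trace / q.2 ^ p := by
  simpa only [Matrix.frobenius_norm_sq_eq_trace_transpose_mul_self] using
    convexOn_norm_sq_div_rpow (E := Matrix m n ℝ) hp₀ hp₁

end Frobenius

theorem convexOn_add_one_div : ConvexOn ℝ (Ioi 0) fun x : ℝ => x + 1 / x :=
  ((convexOn_id (convex_Ioi 0)).add (convexOn_zpow (-1))).congr fun x _ => by simp

theorem phi_polyconvex (d : ℕ) (hd : 2 ≤ d) (lam : ℝ) (hlam : 0 ≤ lam) :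
    ∃ Ψ : Matrix (Fin d) (Fin d) ℝ × ℝ → ℝ,
      ConvexOn ℝ {p : Matrix (Fin d) (Fin d) ℝ × ℝ | 0 < p.2} Ψ ∧
      ∀ J : Matrix (Fin d) (Fin d) ℝ, 0 < J.det →
        (J.transpose * J).trace / J.det ^ ((2 : ℝ) / d) + lam * (J.det + 1 / J.det) =
          Ψ (J, J.det) := by
  refine ⟨fun q => (q.1ᵀ * q.1).trace / q.2 ^ ((2 : ℝ) / d) + lam * (q.2 + 1 / q.2), ?_,
    fun J _ => rfl⟩
  have hp₁ : (2 : ℝ) / d ≤ 1 := div_le_one_of_le₀ (by exact_mod_cast hd) (Nat.cast_nonneg d)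
  exact (convexOn_trace_transpose_mul_self_div_rpow (by positivity) hp₁).add
    ((convexOn_add_one_div.comp_linearMap (LinearMap.snd ℝ _ ℝ)).smul hlam)
end

section
/- Suppose 0 < σ < 1, ε^{k+1} ≥ ε^k − σ·χ(D, ε^k)/(∂χ/∂ε)(D, ε^k) and 0 < ε^{k+1} ≤ ε^k, where χ(D, ε) = (D + √(ε² + D²))/2. Then (1 − σ)·χ(D, ε^k) ≤ χ(D, ε^{k+1}). -/
noncomputable def chi (D ε : ℝ) : ℝ := (D + Real.sqrt (ε ^ 2 + D ^ 2)) / 2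

/-!
`chi D` is convex in `ε`, so it lies above its tangent line at `εk`:
`chi D εk1 ≥ chi D εk + chiDeriv D εk * (εk1 - εk)`; concretely this is the two-term
Cauchy–Schwarz inequality `εk * εk1 + D ^ 2 ≤ √(εk ^ 2 + D ^ 2) * √(εk1 ^ 2 + D ^ 2)`.
Since `chiDeriv D εk > 0`, the update rule bounds the linear term below by `-σ * chi D εk`.
-/

open Real

noncomputable def chiDeriv (D ε : ℝ) : ℝ := ε / (2 * √(ε ^ 2 + D ^ 2))

theorem mul_add_mul_le_sqrt_mul_sqrt (a b c d : ℝ) :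
    a * c + b * d ≤ √(a ^ 2 + b ^ 2) * √(c ^ 2 + d ^ 2) := by
  rw [← sqrt_mul (by positivity)]
  refine le_trans (le_abs_self _) (abs_le_sqrt ?_)
  nlinarith [sq_nonneg (a * d - b * c)]

theorem chiDeriv_pos (D : ℝ) {ε : ℝ} (hε : 0 < ε) : 0 < chiDeriv D ε := by
  unfold chiDeriv
  positivity

theorem chi_add_chiDeriv_mul_sub_le (D ε ε' : ℝ) :
    chi D ε + chiDeriv D ε * (ε' - ε) ≤ chi D ε' := by
  unfold chi chiDeriv
  set s := √(ε ^ 2 + D ^ 2)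
  have hs : 0 ≤ s := sqrt_nonneg _
  have hs1 : 0 ≤ √(ε' ^ 2 + D ^ 2) := sqrt_nonneg _
  suffices ε / s * (ε' - ε) ≤ √(ε' ^ 2 + D ^ 2) - s by
    have hhalf : ε / (2 * s) * (ε' - ε) = ε / s * (ε' - ε) / 2 := by ring
    linarith
  rcases hs.eq_or_lt with hs0 | hspos
  · -- at `ε = D = 0` the slope is the junk value `ε / 0 = 0`
    rw [← hs0, div_zero, zero_mul]
    linarith
  · have hss : s * s = ε ^ 2 + D ^ 2 := mul_self_sqrt (by positivity)
    have hcs := mul_add_mul_le_sqrt_mul_sqrt ε D ε' D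
    rw [div_mul_eq_mul_div, div_le_iff₀ hspos]
    nlinarith

theorem chi_update_bound_general (D σ εk εk1 : ℝ)
    (hεk : 0 < εk)
    (hupd : εk - σ * chi D εk / (εk / (2 * Real.sqrt (εk ^ 2 + D ^ 2))) ≤ εk1) :
    (1 - σ) * chi D εk ≤ chi D εk1 := by
  have hd := chiDeriv_pos D hεk
  have hgap : -(σ * chi D εk / chiDeriv D εk) ≤ εk1 - εk := by
    unfold chiDeriv
    linarith
  have hstep : -(σ * chi D εk) ≤ chiDeriv D εk * (εk1 - εk) := by
    have h := mul_le_mul_of_nonneg_left hgap hd.le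
    rwa [mul_neg, mul_div_cancel₀ _ hd.ne'] at h
  linarith [chi_add_chiDeriv_mul_sub_le D εk εk1]

theorem chi_update_bound (D σ εk εk1 : ℝ) (hσ0 : 0 < σ) (hσ1 : σ < 1)
    (hεk : 0 < εk) (hεk1 : 0 < εk1) (hle : εk1 ≤ εk)
    (hupd : εk - σ * chi D εk / (εk / (2 * Real.sqrt (εk ^ 2 + D ^ 2))) ≤ εk1) :
    (1 - σ) * chi D εk ≤ chi D εk1 :=
  chi_update_bound_general D σ εk εk1 hεk hupd
end

section
/- With χ(D, ε) = (D + √(ε² + D²))/2, the update rule ε^{k+1} := ε^k − σ·χ(D, ε^k)/(∂χ/∂ε)(D, ε^k) for D < 0 can be rewritten as ε^{k+1} = (1 − σ·√(D² + (ε^k)²)/(|D| + √(D² + (ε^k)²)))·ε^k, and satisfies 0 < (1−σ)ε^k ≤ ε^{k+1} < ε^k for 0 < σ < 1. -/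
open Real

/-- With `r = √(ε² + D²)` the quotient is `r (D + r) / ε`; rationalising by `(D + r)(r - D) = ε²`
turns it into `r ε / (r - D)`, and `r - D = |D| + r` since `D ≤ 0`. -/
theorem chi_div_deriv_eq {D ε : ℝ} (hD : D ≤ 0) (hε : ε ≠ 0) :
    chi D ε / (ε / (2 * √(ε ^ 2 + D ^ 2))) = √(D ^ 2 + ε ^ 2) / (|D| + √(D ^ 2 + ε ^ 2)) * ε := by
  rw [add_comm (D ^ 2), abs_of_nonpos hD, chi]
  set r := √(ε ^ 2 + D ^ 2)
  have hr_sq : r ^ 2 = ε ^ 2 + D ^ 2 := sq_sqrt (by positivity)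
  have hr_pos : 0 < r := sqrt_pos.mpr (by positivity)
  have hden : -D + r ≠ 0 := by linarith
  field_simp
  linear_combination hr_sq

theorem sqrt_div_abs_add_sqrt_pos (D : ℝ) {ε : ℝ} (hε : ε ≠ 0) :
    0 < √(D ^ 2 + ε ^ 2) / (|D| + √(D ^ 2 + ε ^ 2)) := by
  have hr_pos : 0 < √(D ^ 2 + ε ^ 2) := sqrt_pos.mpr (by positivity)
  positivity

theorem sqrt_div_abs_add_sqrt_le_one (D ε : ℝ) :
    √(D ^ 2 + ε ^ 2) / (|D| + √(D ^ 2 + ε ^ 2)) ≤ 1 :=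
  div_le_one_of_le₀ (le_add_of_nonneg_left (abs_nonneg D)) (by positivity)

theorem damped_step_bounds {σ θ ε : ℝ} (hσ0 : 0 < σ) (hσ1 : σ < 1) (hθ0 : 0 < θ) (hθ1 : θ ≤ 1)
    (hε : 0 < ε) :
    0 < (1 - σ * θ) * ε ∧ (1 - σ) * ε ≤ (1 - σ * θ) * ε ∧ (1 - σ * θ) * ε < ε := by
  have hσθ_pos : 0 < σ * θ := mul_pos hσ0 hθ0
  have hσθ_le : σ * θ ≤ σ := mul_le_of_le_one_right hσ0.le hθ1
  refine ⟨mul_pos (by linarith) hε, mul_le_mul_of_nonneg_right (by linarith) hε.le, ?_⟩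
  nlinarith

theorem eps_update_rewrite (D σ εk : ℝ) (hD : D < 0) (hεk : 0 < εk)
    (hσ0 : 0 < σ) (hσ1 : σ < 1) :
    let εk1 := εk - σ * chi D εk / (εk / (2 * Real.sqrt (εk ^ 2 + D ^ 2)))
    εk1 = (1 - σ * Real.sqrt (D ^ 2 + εk ^ 2) /
            (|D| + Real.sqrt (D ^ 2 + εk ^ 2))) * εk ∧
    0 < εk1 ∧ (1 - σ) * εk ≤ εk1 ∧ εk1 < εk := by
  intro εk1
  set θ := √(D ^ 2 + εk ^ 2) / (|D| + √(D ^ 2 + εk ^ 2))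
  have hstep : εk1 = (1 - σ * θ) * εk := by
    simp only [εk1, mul_div_assoc, chi_div_deriv_eq hD.le hεk.ne']
    ring
  rw [hstep, mul_div_assoc]
  exact ⟨rfl, damped_step_bounds hσ0 hσ1 (sqrt_div_abs_add_sqrt_pos D hεk.ne')
    (sqrt_div_abs_add_sqrt_le_one D εk) hεk⟩
end
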